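/- arXiv:1005.4254 — 2 statements merged into one kernel-verified Lean document; each statement's English description precedes it below -/
import Mathlib

section
/- For monomial ideals J ⊂ I ⊂ S, the Stanley depth does not decrease upon localization at f: sdepth(I/J) ≤ sdepth((I/J)_f). -/
/-!
Combinatorial model of the localized polynomial ring `S_f`, where
`S = K[x_1, …, x_n]`, `A ⊆ {1, …, n}` and `f = ∏_{j ∈ A} x_j`.

Since all the `ℤⁿ`-graded components of `S_f` are at most one-dimensional over `K`,
monomial `K`-subspaces of `S_f` (in particular monomial ideals, Stanley spaces and
modules `I/J`) are faithfully encoded by their sets of exponent vectors `a : Fin n → ℤ`,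
direct sum decompositions into monomial subspaces correspond exactly to partitions of
the exponent sets, and (for those sets `Z` considered here) `u·K[Z]` is automatically a
free `K[Z]`-module.
-/

/-- Exponent vectors of the monomials of `S_f`: all `a : ℤⁿ` with `a j ≥ 0` for `j ∉ A`. -/
def SfMon {n : ℕ} (A : Finset (Fin n)) : Set (Fin n → ℤ) :=
  {a | ∀ j, j ∉ A → 0 ≤ a j}

/-- `M` is the set of exponent vectors of the monomials of a monomial ideal of `S_f`
(for `A = ∅` this is a monomial ideal of the polynomial ring `S` itself). -/
def IsMonomialIdeal {n : ℕ} (A : Finset (Fin n)) (M : Set (Fin n → ℤ)) : Prop :=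
  M ⊆ SfMon A ∧ ∀ a ∈ M, ∀ c ∈ SfMon A, a + c ∈ M

/-- Admissible sets of "variables" for Stanley spaces in `S_f`: `(i, true)` stands for
`x i` and `(i, false)` for `x i⁻¹`; inverse variables exist only for `i ∈ A`, and
`{x i, x i⁻¹} ⊄ Z`. -/
def ZOk {n : ℕ} (A : Finset (Fin n)) (Z : Finset (Fin n × Bool)) : Prop :=
  (∀ i : Fin n, (i, false) ∈ Z → i ∈ A) ∧
  ∀ i : Fin n, ¬((i, true) ∈ Z ∧ (i, false) ∈ Z)

/-- Exponent vectors of the monomials of the Stanley space `u·K[Z]`. -/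
def stanleySet {n : ℕ} (u : Fin n → ℤ) (Z : Finset (Fin n × Bool)) : Set (Fin n → ℤ) :=
  {a | ∀ i : Fin n, ((i, true) ∈ Z → u i ≤ a i) ∧ ((i, false) ∈ Z → a i ≤ u i) ∧
      ((i, true) ∉ Z → (i, false) ∉ Z → a i = u i)}

/-- The family of Stanley spaces `u i · K[Z i]` is a Stanley decomposition of the
monomial `K`-vector space whose monomials have exponent vectors in `M`. -/
def IsStanleyDecompOn {n : ℕ} (A : Finset (Fin n)) (M : Set (Fin n → ℤ)) {ι : Type}
    (u : ι → Fin n → ℤ) (Z : ι → Finset (Fin n × Bool)) : Prop :=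
  Finite ι ∧ (∀ i, ZOk A (Z i)) ∧
  Pairwise (fun i j : ι => Disjoint (stanleySet (u i) (Z i)) (stanleySet (u j) (Z j))) ∧
  (⋃ i, stanleySet (u i) (Z i)) = M

/-- Stanley depth of the monomial `K`-space with exponent set `M` (value `⊤` for `M = ∅`). -/
noncomputable def sdepth {n : ℕ} (A : Finset (Fin n)) (M : Set (Fin n → ℤ)) : ℕ∞ :=
  sSup {k : ℕ∞ | ∃ (r : ℕ) (u : Fin r → Fin n → ℤ) (Z : Fin r → Finset (Fin n × Bool)),
    IsStanleyDecompOn A M u Z ∧ ∀ i, k ≤ ((Z i).card : ℕ∞)}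

/-- The exponent vector of `f = ∏_{j ∈ A} x_j`. -/
def fVec {n : ℕ} (A : Finset (Fin n)) : Fin n → ℤ := fun i => if i ∈ A then 1 else 0

/-- Localization at `f` of a monomial ideal (given by its set of exponent vectors). -/
def locSet {n : ℕ} (A : Finset (Fin n)) (M : Set (Fin n → ℤ)) : Set (Fin n → ℤ) :=
  {b ∈ SfMon A | ∃ k : ℕ, b + (k : ℤ) • fVec A ∈ M}

/-- `|a| = Σ_i |a_i|`, the degree used for the Hilbert series. -/
def degAbs {n : ℕ} (a : Fin n → ℤ) : ℕ := ∑ i, (a i).natAbs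

/-- The Hilbert series `H_M(t) = Σ_d H(M,d) t^d`, `H(M,d) = #{a ∈ M : |a| = d}`, of the
`ℤⁿ`-graded `K`-vector space with monomial exponent set `M`. -/
noncomputable def hilbSeries {n : ℕ} (M : Set (Fin n → ℤ)) : PowerSeries ℚ :=
  PowerSeries.mk fun d => (({a ∈ M | degAbs a = d}).ncard : ℚ)

/-- A prime filtration `J = N 0 ⊂ N 1 ⊂ … ⊂ N r = I` of `I/J` by monomial ideals of `S_f`,
with `i`-th factor isomorphic, as a `ℤⁿ`-graded module, to `(S_f/P_{B i})(-a i)`, where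
`P_B` is the monomial prime ideal generated by the variables `x j`, `j ∈ B`. -/
def IsPrimeFiltration {n : ℕ} (A : Finset (Fin n)) (J I : Set (Fin n → ℤ)) (r : ℕ)
    (N : Fin (r + 1) → Set (Fin n → ℤ)) (B : Fin r → Finset (Fin n))
    (a : Fin r → Fin n → ℤ) : Prop :=
  N 0 = J ∧ N (Fin.last r) = I ∧
  (∀ i : Fin (r + 1), IsMonomialIdeal A (N i)) ∧
  (∀ i : Fin r, N i.castSucc ⊂ N i.succ) ∧
  (∀ i : Fin r, ∀ j ∈ A, j ∉ B i) ∧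
  (∀ i : Fin r, ∀ j, 0 ≤ a i j) ∧
  (∀ i : Fin r, ∀ j ∈ A, a i j = 0) ∧
  (∀ i : Fin r, N i.succ \ N i.castSucc =
    {b | ∃ c ∈ SfMon A, (∀ j ∈ B i, c j = 0) ∧ b = a i + c})

/-- `fdepth` of `I/J` (value `⊤` for `I = J`); `dim S_f/P_B = n - |B|`. -/
noncomputable def fdepth {n : ℕ} (A : Finset (Fin n)) (J I : Set (Fin n → ℤ)) : ℕ∞ :=
  sSup {k : ℕ∞ | ∃ (r : ℕ) (N : Fin (r + 1) → Set (Fin n → ℤ)) (B : Fin r → Finset (Fin n))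
      (a : Fin r → Fin n → ℤ), IsPrimeFiltration A J I r N B a ∧
      ∀ i, k ≤ ((n - (B i).card : ℕ) : ℕ∞)}

/-- The set of exponent vectors of the monomials of the colon ideal `(J :_{S_f} I)`,
which is the annihilator of `I/J`. -/
def colonSet {n : ℕ} (A : Finset (Fin n)) (I J : Set (Fin n → ℤ)) : Set (Fin n → ℤ) :=
  {c ∈ SfMon A | ∀ a ∈ I, a + c ∈ J}

/-- The monomial prime `P_B·S_f` contains the monomial ideal with exponent set `Q`. -/
def primeContainsIdeal {n : ℕ} (B : Finset (Fin n)) (Q : Set (Fin n → ℤ)) : Prop :=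
  ∀ c ∈ Q, ∃ j ∈ B, 1 ≤ c j

/-- `P_B·S_f` is a minimal prime ideal of the module `I/J`, i.e. a prime of `S_f`
(so `B ∩ A = ∅`) minimal among those containing `ann(I/J) = (J : I)`. -/
def IsMinimalPrimeOf {n : ℕ} (A B : Finset (Fin n)) (I J : Set (Fin n → ℤ)) : Prop :=
  (∀ j ∈ A, j ∉ B) ∧ primeContainsIdeal B (colonSet A I J) ∧
  ∀ B' ⊆ B, primeContainsIdeal B' (colonSet A I J) → B' = B

/-!
A Stanley space `u K[Z]` of `I/J` that misses some `x_j`, `j ∈ A`, contains only finitely many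
of the translates `f^k b` of a monomial `b`, so it disappears in `(I/J)_f`; one that contains
all `x_j`, `j ∈ A`, becomes `u K[Z, x_j⁻¹ : j ∈ A]`. Since `K[x, x⁻¹] = K[x] ⊕ x⁻¹ K[x⁻¹]`,
the latter is the direct sum, over `T ⊆ A`, of the Stanley spaces `(u / ∏_{j ∈ T} x_j) K[Z_T]`,
where `Z_T` is `Z` with `x_j` replaced by `x_j⁻¹` for `j ∈ T`; each has `|Z|` variables. So every
Stanley decomposition of `I/J` induces one of `(I/J)_f` of at least the same Stanley depth.
-/

section StanleyDecomposition

variable {n : ℕ} {A : Finset (Fin n)}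

theorem self_mem_stanleySet (u : Fin n → ℤ) (Z : Finset (Fin n × Bool)) : u ∈ stanleySet u Z :=
  fun _ => ⟨fun _ => le_rfl, fun _ => le_rfl, fun _ _ => rfl⟩

theorem ZOk.false_notMem {Z : Finset (Fin n × Bool)} (hZ : ZOk ∅ Z) (j : Fin n) :
    (j, false) ∉ Z :=
  fun hj => by simpa using hZ.1 j hj

theorem le_sdepth_of_isStanleyDecompOn {M : Set (Fin n → ℤ)} {ι : Type} {u : ι → Fin n → ℤ}
    {Z : ι → Finset (Fin n × Bool)} (hD : IsStanleyDecompOn A M u Z) {k : ℕ∞}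
    (hk : ∀ i, k ≤ (Z i).card) : k ≤ sdepth A M := by
  obtain ⟨hfin, hZ, hdisj, hunion⟩ := hD
  let e := (Finite.equivFin ι).symm
  refine le_sSup ⟨Nat.card ι, u ∘ e, Z ∘ e,
    ⟨inferInstance, fun i => hZ _, fun i j hij => hdisj (e.injective.ne hij), ?_⟩,
    fun i => hk _⟩
  rw [← hunion]
  exact e.surjective.iUnion_comp (fun i => stanleySet (u i) (Z i))

theorem IsStanleyDecompOn.stanleySet_subset {M : Set (Fin n → ℤ)} {ι : Type}
    {u : ι → Fin n → ℤ} {Z : ι → Finset (Fin n × Bool)} (hD : IsStanleyDecompOn A M u Z)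
    (i : ι) : stanleySet (u i) (Z i) ⊆ M :=
  hD.2.2.2 ▸ Set.subset_iUnion (fun i => stanleySet (u i) (Z i)) i

open Function in
theorem IsStanleyDecompOn.sigma {κ : Type} [Finite κ] {M : κ → Set (Fin n → ℤ)}
    (hM : Pairwise (Disjoint on M)) {ι : κ → Type} {u : ∀ c, ι c → Fin n → ℤ}
    {Z : ∀ c, ι c → Finset (Fin n × Bool)} (hD : ∀ c, IsStanleyDecompOn A (M c) (u c) (Z c)) :
    IsStanleyDecompOn A (⋃ c, M c) (fun p : Σ c, ι c => u p.1 p.2)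
      (fun p => Z p.1 p.2) := by
  have : ∀ c, Finite (ι c) := fun c => (hD c).1
  refine ⟨inferInstance, fun p => (hD p.1).2.1 p.2, ?_, ?_⟩
  · rintro ⟨c, x⟩ ⟨c', y⟩ hne
    by_cases hc : c = c'
    · subst hc
      exact (hD c).2.2.1 fun hxy => hne (congrArg _ hxy)
    · exact (hM hc).mono ((hD c).stanleySet_subset x) ((hD c').stanleySet_subset y)
  · rw [Set.iUnion_sigma]
    exact Set.iUnion_congr fun c => (hD c).2.2.2

end StanleyDecomposition

section Localization

variable {n : ℕ} {A : Finset (Fin n)}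

theorem fVec_nonneg (j : Fin n) : 0 ≤ fVec A j := by
  unfold fVec; split_ifs <;> norm_num

theorem add_natCast_smul_fVec_mem {M : Set (Fin n → ℤ)} (hM : ∀ a ∈ M, a + fVec A ∈ M)
    {a : Fin n → ℤ} (ha : a ∈ M) (k : ℕ) : a + (k : ℤ) • fVec A ∈ M := by
  induction k with
  | zero => simpa using ha
  | succ k ih =>
    convert hM _ ih using 1
    push_cast
    rw [add_smul, one_smul, add_assoc]

theorem IsMonomialIdeal.add_fVec_mem {M : Set (Fin n → ℤ)} (hM : IsMonomialIdeal ∅ M)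
    {a : Fin n → ℤ} (ha : a ∈ M) : a + fVec A ∈ M :=
  hM.2 a ha _ fun j _ => fVec_nonneg j

theorem eventually_add_natCast_smul_fVec_mem {M : Set (Fin n → ℤ)} (hM : ∀ a ∈ M, a + fVec A ∈ M)
    {b : Fin n → ℤ} (hb : b ∈ locSet A M) :
    ∀ᶠ k : ℕ in Filter.atTop, b + (k : ℤ) • fVec A ∈ M := by
  obtain ⟨-, k, hk⟩ := hb
  refine Filter.eventually_atTop.2 ⟨k, fun k' hk' => ?_⟩
  obtain ⟨m, rfl⟩ := Nat.exists_eq_add_of_le hk'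
  simpa [add_smul, add_assoc] using add_natCast_smul_fVec_mem hM hk m

theorem add_fVec_mem_stanleySet {u b : Fin n → ℤ} {Z : Finset (Fin n × Bool)} {B : Finset (Fin n)}
    (hZ : ZOk B Z) (hAZ : ∀ j ∈ A, (j, true) ∈ Z) (hb : b ∈ stanleySet u Z) :
    b + fVec A ∈ stanleySet u Z := by
  intro i
  by_cases hi : i ∈ A
  · have hf : (i, false) ∉ Z := fun hf => hZ.2 i ⟨hAZ i hi, hf⟩
    simpa [fVec, hi, hAZ i hi, hf] using ((hb i).1 (hAZ i hi)).trans (by omega)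
  · simpa [fVec, hi] using hb i

theorem forall_mem_of_add_natCast_smul_fVec_mem_stanleySet {u b : Fin n → ℤ}
    {Z : Finset (Fin n × Bool)} (hZ : ZOk ∅ Z) {k k' : ℕ} (hkk' : k ≠ k')
    (hk : b + (k : ℤ) • fVec A ∈ stanleySet u Z) (hk' : b + (k' : ℤ) • fVec A ∈ stanleySet u Z) :
    ∀ j ∈ A, (j, true) ∈ Z := by
  intro j hj
  by_contra hjZ
  have hf := hZ.false_notMem j
  have := ((hk j).2.2 hjZ hf).trans ((hk' j).2.2 hjZ hf).symm
  simp [fVec, hj] at this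
  omega

end Localization

section InvertVariables

variable {n : ℕ} {A T : Finset (Fin n)}

def invertOn (T : Finset (Fin n)) (q : Fin n × Bool) : Fin n × Bool :=
  if q.1 ∈ T then (q.1, !q.2) else q

theorem invertOn_involutive (T : Finset (Fin n)) : Function.Involutive (invertOn T) := by
  rintro ⟨j, s⟩
  by_cases hj : j ∈ T <;> simp [invertOn, hj]

def invertVars (T : Finset (Fin n)) (Z : Finset (Fin n × Bool)) : Finset (Fin n × Bool) :=
  Z.image (invertOn T)

theorem card_invertVars (T : Finset (Fin n)) (Z : Finset (Fin n × Bool)) :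
    (invertVars T Z).card = Z.card :=
  Finset.card_image_of_injective Z (invertOn_involutive T).injective

theorem mem_invertVars {Z : Finset (Fin n × Bool)} {j : Fin n} {s : Bool} :
    (j, s) ∈ invertVars T Z ↔ (j, if j ∈ T then !s else s) ∈ Z := by
  have key : (j, if j ∈ T then !s else s) = invertOn T (j, s) := by
    by_cases hj : j ∈ T <;> simp [invertOn, hj]
  rw [key, invertVars, ← (invertOn_involutive T).injective.mem_finset_image,
    Finset.image_image, (invertOn_involutive T).comp_self, Finset.image_id]

theorem ZOk_invertVars {Z : Finset (Fin n × Bool)} (hZ : ZOk ∅ Z) (hTA : T ⊆ A) :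
    ZOk A (invertVars T Z) := by
  have hf := hZ.false_notMem
  refine ⟨fun j hj => ?_, fun j ⟨ht, hf'⟩ => ?_⟩
  · by_cases hjT : j ∈ T
    · exact hTA hjT
    · simp [mem_invertVars, hjT, hf] at hj
  · by_cases hjT : j ∈ T
    · simp [mem_invertVars, hjT, hf] at ht
    · simp [mem_invertVars, hjT, hf] at hf'

end InvertVariables

section LocalizedStanleySpace

variable {n : ℕ} {A T : Finset (Fin n)} {u b : Fin n → ℤ} {Z : Finset (Fin n × Bool)}

theorem mem_stanleySet_sub_fVec_invertVars (hZ : ZOk ∅ Z) (hAZ : ∀ j ∈ A, (j, true) ∈ Z)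
    (hTA : T ⊆ A) :
    b ∈ stanleySet (u - fVec T) (invertVars T Z) ↔
      A.piecewise u b ∈ stanleySet u Z ∧ ∀ i ∈ A, (i ∈ T ↔ b i < u i) := by
  have hf := hZ.false_notMem
  simp only [stanleySet, Set.mem_ofPred_eq, ← forall_and]
  refine forall_congr' fun i => ?_
  by_cases hiT : i ∈ T
  · have hiA := hTA hiT
    simp [mem_invertVars, hiT, hiA, hAZ i hiA, hf, fVec]
  by_cases hiA : i ∈ A
  · simp [mem_invertVars, hiT, hiA, hAZ i hiA, hf, fVec]
  · simp [mem_invertVars, hiT, hiA, fVec]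

theorem mem_locSet_stanleySet (hu : u ∈ SfMon ∅) (hZ : ZOk ∅ Z)
    (hAZ : ∀ j ∈ A, (j, true) ∈ Z) :
    b ∈ locSet A (stanleySet u Z) ↔ A.piecewise u b ∈ stanleySet u Z := by
  have hf := hZ.false_notMem
  constructor
  · rintro ⟨-, k, hk⟩ i
    by_cases hiA : i ∈ A
    · simp [hiA]
    · simpa [hiA, fVec] using hk i
  · intro h
    refine ⟨fun j hjA => ?_, ?_⟩
    · have := h j
      by_cases hjZ : (j, true) ∈ Z
      · simp [hjA, hjZ] at this
        linarith [hu j (Finset.notMem_empty j)]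
      · simp [hjA, hjZ, hf] at this
        linarith [hu j (Finset.notMem_empty j)]
    · obtain ⟨k, hk⟩ := Finite.exists_le fun i => (u i - b i).toNat
      refine ⟨k, fun i => ?_⟩
      by_cases hiA : i ∈ A
      · have := hk i
        simp [hiA, hAZ i hiA, hf, fVec]
        omega
      · simpa [hiA, fVec] using h i

theorem isStanleyDecompOn_locSet_stanleySet (hu : u ∈ SfMon ∅) (hZ : ZOk ∅ Z)
    (hAZ : ∀ j ∈ A, (j, true) ∈ Z) :
    IsStanleyDecompOn A (locSet A (stanleySet u Z))
      (fun T : {T : Finset (Fin n) // T ⊆ A} => u - fVec T) (fun T => invertVars T Z) := by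
  refine ⟨inferInstance, fun T => ZOk_invertVars hZ T.2, fun T T' hTT' => ?_, ?_⟩
  · refine Set.disjoint_left.2 fun b hb hb' => ?_
    rw [mem_stanleySet_sub_fVec_invertVars hZ hAZ T.2] at hb
    rw [mem_stanleySet_sub_fVec_invertVars hZ hAZ T'.2] at hb'
    refine hTT' (Subtype.ext (Finset.ext fun j => ?_))
    by_cases hj : j ∈ A
    · exact (hb.2 j hj).trans (hb'.2 j hj).symm
    · exact iff_of_false (fun h => hj (T.2 h)) (fun h => hj (T'.2 h))
  · ext b
    rw [Set.mem_iUnion, mem_locSet_stanleySet hu hZ hAZ]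
    constructor
    · rintro ⟨T, hb⟩
      exact ((mem_stanleySet_sub_fVec_invertVars hZ hAZ T.2).1 hb).1
    · intro h
      refine ⟨⟨A.filter fun i => b i < u i, Finset.filter_subset _ _⟩,
        (mem_stanleySet_sub_fVec_invertVars hZ hAZ (Finset.filter_subset _ _)).2
          ⟨h, fun i hi => by simp [hi]⟩⟩

end LocalizedStanleySpace

section LocalizationOfDecomposition

variable {n : ℕ} {A B : Finset (Fin n)} {ι : Type} {u : ι → Fin n → ℤ}
  {Z : ι → Finset (Fin n × Bool)}

open Function in
theorem pairwise_disjoint_locSet_stanleySet {M : Set (Fin n → ℤ)}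
    (hD : IsStanleyDecompOn B M u Z) :
    Pairwise (Disjoint on
      fun i : {i // ∀ j ∈ A, (j, true) ∈ Z i} => locSet A (stanleySet (u i) (Z i))) := by
  intro i i' hii'
  rw [Function.onFun, Set.disjoint_left]
  intro b hb hb'
  obtain ⟨k, hk, hk'⟩ :=
    ((eventually_add_natCast_smul_fVec_mem
        (fun _ => add_fVec_mem_stanleySet (hD.2.1 i) i.2) hb).and
      (eventually_add_natCast_smul_fVec_mem
        (fun _ => add_fVec_mem_stanleySet (hD.2.1 i') i'.2) hb')).exists
  exact Set.disjoint_left.1 (hD.2.2.1 fun h => hii' (Subtype.ext h)) hk hk'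

theorem locSet_sdiff_locSet_eq_iUnion {I J : Set (Fin n → ℤ)} (hI : IsMonomialIdeal ∅ I)
    (hJ : IsMonomialIdeal ∅ J) (hD : IsStanleyDecompOn ∅ (I \ J) u Z) :
    locSet A I \ locSet A J =
      ⋃ i : {i // ∀ j ∈ A, (j, true) ∈ Z i}, locSet A (stanleySet (u i) (Z i)) := by
  ext b
  simp only [Set.mem_sdiff, Set.mem_iUnion]
  constructor
  · rintro ⟨⟨hbA, k₀, hk₀⟩, hbJ⟩
    have hIJ : ∀ m : ℕ, b + ((k₀ + m : ℕ) : ℤ) • fVec A ∈ ⋃ i, stanleySet (u i) (Z i) := by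
      intro m
      have hI' := add_natCast_smul_fVec_mem (A := A) (fun _ => hI.add_fVec_mem) hk₀ m
      rw [add_assoc, ← add_smul, ← Nat.cast_add] at hI'
      rw [hD.2.2.2]
      exact ⟨hI', fun h => hbJ ⟨hbA, _, h⟩⟩
    -- pigeonhole: two of the translates `b + k f ∈ I \ J` lie in the same Stanley space
    choose piece hpiece using fun m => Set.mem_iUnion.1 (hIJ m)
    have : Finite ι := hD.1
    obtain ⟨m, m', hmm', hpm⟩ := Finite.exists_ne_map_eq_of_infinite piece
    refine ⟨⟨piece m, forall_mem_of_add_natCast_smul_fVec_mem_stanleySet (hD.2.1 _)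
      (by omega : k₀ + m ≠ k₀ + m') (hpiece m) (hpm ▸ hpiece m')⟩, hbA, _, hpiece m⟩
  · rintro ⟨i, hbA, k, hk⟩
    have hIJ := hD.stanleySet_subset i hk
    refine ⟨⟨hbA, k, hIJ.1⟩, fun hbJ => ?_⟩
    obtain ⟨k', hk'J, hk'i⟩ :=
      ((eventually_add_natCast_smul_fVec_mem (fun _ => hJ.add_fVec_mem) hbJ).and
        (eventually_add_natCast_smul_fVec_mem (fun _ => add_fVec_mem_stanleySet (hD.2.1 i) i.2)
          ⟨hbA, k, hk⟩)).exists
    exact (hD.stanleySet_subset i hk'i).2 hk'J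

end LocalizationOfDecomposition

theorem sdepth_le_sdepth_localization_general {n : ℕ} (A : Finset (Fin n))
    (I J : Set (Fin n → ℤ))
    (hI : IsMonomialIdeal (∅ : Finset (Fin n)) I) (hJ : IsMonomialIdeal ∅ J) :
    sdepth (∅ : Finset (Fin n)) (I \ J) ≤ sdepth A (locSet A I \ locSet A J) := by
  refine sSup_le ?_
  rintro k ⟨r, u, Z, hD, hk⟩
  have hu : ∀ i, u i ∈ SfMon ∅ := fun i =>
    hI.1 (hD.stanleySet_subset i (self_mem_stanleySet (u i) (Z i))).1
  rw [locSet_sdiff_locSet_eq_iUnion hI hJ hD]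
  refine le_sdepth_of_isStanleyDecompOn
    (IsStanleyDecompOn.sigma (pairwise_disjoint_locSet_stanleySet hD)
      fun i => isStanleyDecompOn_locSet_stanleySet (hu i) (hD.2.1 i) i.2) fun p => ?_
  rw [card_invertVars]
  exact hk p.1

/-- Stanley depth does not decrease upon localization: for monomial ideals
`J ⊂ I ⊂ S` (ambient parameter `A = ∅`), `sdepth I/J ≤ sdepth (I/J)_f`. -/
theorem sdepth_le_sdepth_localization {n : ℕ} (A : Finset (Fin n))
    (I J : Set (Fin n → ℤ))
    (hI : IsMonomialIdeal (∅ : Finset (Fin n)) I) (hJ : IsMonomialIdeal ∅ J)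
    (hJI : J ⊂ I) :
    sdepth (∅ : Finset (Fin n)) (I \ J) ≤ sdepth A (locSet A I \ locSet A J) :=
  sdepth_le_sdepth_localization_general A I J hI hJ
end

section
/- Let J ⊂ I ⊂ S_f be monomial ideals and t_1,…,t_r new variables. Then sdepth((I/J)[t_1^{±1},…,t_r^{±1}]) = sdepth(I/J) + r, where (I/J)[t_1^{±1},…,t_r^{±1}] is the extension of I/J to the Laurent polynomial extension S_f[t_1^{±1},…,t_r^{±1}]. -/
/-!
Tensoring a Stanley decomposition of `I/J` with the decomposition
`K[t^{±1}] = ⊕_σ t^{-σ}·K[t_1^{ε_1}, …, t_r^{ε_r}]` into `2^r` orthants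
(`σ_k = 0, ε_k = 1` or `σ_k = 1, ε_k = -1`) gives a Stanley decomposition of the extension
whose spaces all have `r` more variables. Conversely, cutting a Stanley decomposition of the
extension with the slice of exponents `(a, 0)` gives one of `I/J`, and a space loses at most
`r` variables there because it never contains both `t_k` and `t_k⁻¹`.

The lower bound needs some Stanley decomposition of `I/J` to exist, since otherwise `sdepth`
is the junk value `sSup ∅ = 0`. By Dickson's lemma, membership in `I` and in `J` only depends
on the exponents off `A` truncated at a common bound `d` and on the signs of those in `A`; the
fibres of this truncation are Stanley spaces, and finitely many of them make up `I/J`.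
-/

section Append

variable {n r : ℕ}

@[simp]
theorem Fin.castAdd_ne_natAdd (i : Fin n) (k : Fin r) : Fin.castAdd r i ≠ Fin.natAdd n k := by
  simp only [ne_eq, Fin.ext_iff, Fin.val_castAdd, Fin.val_natAdd]
  omega

@[simp]
theorem Fin.natAdd_ne_castAdd (k : Fin r) (i : Fin n) : Fin.natAdd n k ≠ Fin.castAdd r i :=
  (Fin.castAdd_ne_natAdd i k).symm

def appendIdx (A₁ : Finset (Fin n)) (A₂ : Finset (Fin r)) : Finset (Fin (n + r)) :=
  A₁.image (Fin.castAdd r) ∪ A₂.image (Fin.natAdd n)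

def appendVars (Z₁ : Finset (Fin n × Bool)) (Z₂ : Finset (Fin r × Bool)) :
    Finset (Fin (n + r) × Bool) :=
  Z₁.image (Prod.map (Fin.castAdd r) id) ∪ Z₂.image (Prod.map (Fin.natAdd n) id)

def leftVars (Z : Finset (Fin (n + r) × Bool)) : Finset (Fin n × Bool) :=
  {p | (Fin.castAdd r p.1, p.2) ∈ Z}

def rightVars (Z : Finset (Fin (n + r) × Bool)) : Finset (Fin r × Bool) :=
  {p | (Fin.natAdd n p.1, p.2) ∈ Z}

@[simp]
theorem mem_leftVars {Z : Finset (Fin (n + r) × Bool)} {i : Fin n} {b : Bool} :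
    (i, b) ∈ leftVars Z ↔ (Fin.castAdd r i, b) ∈ Z := by
  simp [leftVars]

@[simp]
theorem mem_rightVars {Z : Finset (Fin (n + r) × Bool)} {k : Fin r} {b : Bool} :
    (k, b) ∈ rightVars Z ↔ (Fin.natAdd n k, b) ∈ Z := by
  simp [rightVars]

@[simp]
theorem castAdd_mem_appendIdx {A₁ : Finset (Fin n)} {A₂ : Finset (Fin r)} {i : Fin n} :
    Fin.castAdd r i ∈ appendIdx A₁ A₂ ↔ i ∈ A₁ := by
  simp [appendIdx]

@[simp]
theorem natAdd_mem_appendIdx {A₁ : Finset (Fin n)} {A₂ : Finset (Fin r)} {k : Fin r} :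
    Fin.natAdd n k ∈ appendIdx A₁ A₂ ↔ k ∈ A₂ := by
  simp [appendIdx]

@[simp]
theorem leftVars_appendVars (Z₁ : Finset (Fin n × Bool)) (Z₂ : Finset (Fin r × Bool)) :
    leftVars (appendVars Z₁ Z₂) = Z₁ := by
  ext ⟨i, b⟩
  simp [appendVars]

@[simp]
theorem rightVars_appendVars (Z₁ : Finset (Fin n × Bool)) (Z₂ : Finset (Fin r × Bool)) :
    rightVars (appendVars Z₁ Z₂) = Z₂ := by
  ext ⟨k, b⟩
  simp [appendVars]

theorem appendVars_leftVars_rightVars (Z : Finset (Fin (n + r) × Bool)) :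
    appendVars (leftVars Z) (rightVars Z) = Z := by
  ext ⟨j, b⟩
  induction j using Fin.addCases <;> simp [appendVars]

theorem card_appendVars (Z₁ : Finset (Fin n × Bool)) (Z₂ : Finset (Fin r × Bool)) :
    (appendVars Z₁ Z₂).card = Z₁.card + Z₂.card := by
  rw [appendVars, Finset.card_union_of_disjoint,
    Finset.card_image_of_injective _ ((Fin.castAdd_injective n r).prodMap Function.injective_id),
    Finset.card_image_of_injective _ ((Fin.natAdd_injective r n).prodMap Function.injective_id)]
  simp only [Finset.disjoint_left, Finset.mem_image, Prod.exists, Prod.map, id, not_exists,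
    not_and]
  rintro _ ⟨i, b, -, rfl⟩ k c - h
  exact Fin.castAdd_ne_natAdd i k (congrArg Prod.fst h).symm

theorem ZOk.card_le {m : ℕ} {A : Finset (Fin m)} {Z : Finset (Fin m × Bool)} (hZ : ZOk A Z) :
    Z.card ≤ m := by
  refine (Finset.card_le_card_of_injOn Prod.fst (fun _ _ => Finset.mem_coe.2 (Finset.mem_univ _))
    ?_).trans_eq (Finset.card_fin m)
  rintro ⟨i, b⟩ hb ⟨j, c⟩ hc (rfl : i = j)
  cases b <;> cases c
  · rfl
  · exact absurd ⟨hc, hb⟩ (hZ.2 i)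
  · exact absurd ⟨hb, hc⟩ (hZ.2 i)
  · rfl

theorem zOk_appendIdx_iff {A₁ : Finset (Fin n)} {A₂ : Finset (Fin r)}
    {Z : Finset (Fin (n + r) × Bool)} :
    ZOk (appendIdx A₁ A₂) Z ↔ ZOk A₁ (leftVars Z) ∧ ZOk A₂ (rightVars Z) := by
  simp only [ZOk, Fin.forall_fin_add, mem_leftVars, mem_rightVars, castAdd_mem_appendIdx,
    natAdd_mem_appendIdx]
  tauto

theorem card_le_card_leftVars_add {A₁ : Finset (Fin n)} {A₂ : Finset (Fin r)}
    {Z : Finset (Fin (n + r) × Bool)} (hZ : ZOk (appendIdx A₁ A₂) Z) :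
    Z.card ≤ (leftVars Z).card + r := by
  have hright := (zOk_appendIdx_iff.1 hZ).2.card_le
  calc Z.card = (appendVars (leftVars Z) (rightVars Z)).card := by
        rw [appendVars_leftVars_rightVars]
    _ = (leftVars Z).card + (rightVars Z).card := card_appendVars _ _
    _ ≤ (leftVars Z).card + r := by omega

theorem mem_stanleySet_iff_castAdd_natAdd {u a : Fin (n + r) → ℤ}
    {Z : Finset (Fin (n + r) × Bool)} :
    a ∈ stanleySet u Z ↔
      (fun i => a (Fin.castAdd r i)) ∈ stanleySet (fun i => u (Fin.castAdd r i)) (leftVars Z) ∧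
      (fun k => a (Fin.natAdd n k)) ∈ stanleySet (fun k => u (Fin.natAdd n k)) (rightVars Z) := by
  simp only [stanleySet, Set.mem_ofPred_eq, mem_leftVars, mem_rightVars]
  exact Fin.forall_fin_add _

@[simp]
theorem append_mem_stanleySet_iff {u : Fin (n + r) → ℤ} {Z : Finset (Fin (n + r) × Bool)}
    {a : Fin n → ℤ} {c : Fin r → ℤ} :
    Fin.append a c ∈ stanleySet u Z ↔
      a ∈ stanleySet (fun i => u (Fin.castAdd r i)) (leftVars Z) ∧
      c ∈ stanleySet (fun k => u (Fin.natAdd n k)) (rightVars Z) := by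
  simp [mem_stanleySet_iff_castAdd_natAdd (a := Fin.append a c)]

@[simp]
theorem mem_stanleySet_append_appendVars_iff {u₁ : Fin n → ℤ} {u₂ : Fin r → ℤ}
    {Z₁ : Finset (Fin n × Bool)} {Z₂ : Finset (Fin r × Bool)} {a : Fin (n + r) → ℤ} :
    a ∈ stanleySet (Fin.append u₁ u₂) (appendVars Z₁ Z₂) ↔
      (fun i => a (Fin.castAdd r i)) ∈ stanleySet u₁ Z₁ ∧
      (fun k => a (Fin.natAdd n k)) ∈ stanleySet u₂ Z₂ := by
  simp [mem_stanleySet_iff_castAdd_natAdd (a := a)]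

end Append

def HasStanleyDecomp {n : ℕ} (A : Finset (Fin n)) (M : Set (Fin n → ℤ)) : Prop :=
  ∃ (s : ℕ) (u : Fin s → Fin n → ℤ) (Z : Fin s → Finset (Fin n × Bool)),
    IsStanleyDecompOn A M u Z

namespace IsStanleyDecompOn

variable {n r : ℕ} {ι κ : Type}

theorem append {A₁ : Finset (Fin n)} {A₂ : Finset (Fin r)} {M₁ : Set (Fin n → ℤ)}
    {M₂ : Set (Fin r → ℤ)} {u₁ : ι → Fin n → ℤ} {Z₁ : ι → Finset (Fin n × Bool)}
    {u₂ : κ → Fin r → ℤ} {Z₂ : κ → Finset (Fin r × Bool)}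
    (h₁ : IsStanleyDecompOn A₁ M₁ u₁ Z₁) (h₂ : IsStanleyDecompOn A₂ M₂ u₂ Z₂) :
    IsStanleyDecompOn (appendIdx A₁ A₂)
      {a | (fun i => a (Fin.castAdd r i)) ∈ M₁ ∧ (fun k => a (Fin.natAdd n k)) ∈ M₂}
      (fun p : ι × κ => Fin.append (u₁ p.1) (u₂ p.2)) (fun p => appendVars (Z₁ p.1) (Z₂ p.2)) := by
  obtain ⟨hfin₁, hZ₁, hdisj₁, hcover₁⟩ := h₁
  obtain ⟨hfin₂, hZ₂, hdisj₂, hcover₂⟩ := h₂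
  refine ⟨inferInstance, fun p => zOk_appendIdx_iff.2 (by simpa using ⟨hZ₁ p.1, hZ₂ p.2⟩),
    ?_, ?_⟩
  · rintro ⟨i, k⟩ ⟨i', k'⟩ hne
    simp only [Set.disjoint_left, mem_stanleySet_append_appendVars_iff]
    rintro a ⟨hi, hk⟩ ⟨hi', hk'⟩
    obtain rfl | hii' := eq_or_ne i i'
    · exact Set.disjoint_left.1 (hdisj₂ fun hkk' => hne (by rw [hkk'])) hk hk'
    · exact Set.disjoint_left.1 (hdisj₁ hii') hi hi'
  · ext a
    simp only [Set.mem_iUnion, Prod.exists, mem_stanleySet_append_appendVars_iff, ← hcover₁,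
      ← hcover₂, Set.mem_ofPred_eq, exists_and_left, exists_and_right]

theorem restrict {A₁ : Finset (Fin n)} {A₂ : Finset (Fin r)} {M : Set (Fin (n + r) → ℤ)}
    {u : ι → Fin (n + r) → ℤ} {Z : ι → Finset (Fin (n + r) × Bool)}
    (h : IsStanleyDecompOn (appendIdx A₁ A₂) M u Z) (c : Fin r → ℤ) :
    IsStanleyDecompOn A₁ {a | Fin.append a c ∈ M}
      (fun i : {i // c ∈ stanleySet (fun k => u i (Fin.natAdd n k)) (rightVars (Z i))} =>
        fun j => u i (Fin.castAdd r j))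
      (fun i => leftVars (Z i)) := by
  obtain ⟨hfin, hZ, hdisj, hcover⟩ := h
  refine ⟨inferInstance, fun i => (zOk_appendIdx_iff.1 (hZ i)).1, ?_, ?_⟩
  · rintro ⟨i, hi⟩ ⟨j, hj⟩ hne
    rw [Set.disjoint_left]
    intro a hai haj
    exact Set.disjoint_left.1 (hdisj fun hij => hne (Subtype.ext hij))
      (append_mem_stanleySet_iff.2 ⟨hai, hi⟩) (append_mem_stanleySet_iff.2 ⟨haj, hj⟩)
  · ext a
    simp only [Set.mem_iUnion, Set.mem_ofPred_eq, ← hcover, append_mem_stanleySet_iff,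
      Subtype.exists]
    exact exists_congr fun i => by tauto

theorem exists_fin {A : Finset (Fin n)} {M : Set (Fin n → ℤ)} {u : ι → Fin n → ℤ}
    {Z : ι → Finset (Fin n × Bool)} (h : IsStanleyDecompOn A M u Z) :
    ∃ (s : ℕ) (e : Fin s ≃ ι), IsStanleyDecompOn A M (u ∘ e) (Z ∘ e) := by
  have := h.1
  obtain ⟨s, ⟨e⟩⟩ := Finite.exists_equiv_fin ι
  refine ⟨s, e.symm, inferInstance, fun i => h.2.1 _,
    fun i j hij => h.2.2.1 (e.symm.injective.ne hij), ?_⟩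
  rw [← h.2.2.2]
  exact e.symm.surjective.iUnion_comp fun i => stanleySet (u i) (Z i)

theorem le_sdepth {A : Finset (Fin n)} {M : Set (Fin n → ℤ)} {u : ι → Fin n → ℤ}
    {Z : ι → Finset (Fin n × Bool)} (h : IsStanleyDecompOn A M u Z) {k : ℕ∞}
    (hk : ∀ i, k ≤ (Z i).card) : k ≤ sdepth A M := by
  obtain ⟨s, e, he⟩ := h.exists_fin
  exact le_sSup ⟨s, u ∘ e, Z ∘ e, he, fun i => hk (e i)⟩

theorem hasStanleyDecomp {A : Finset (Fin n)} {M : Set (Fin n → ℤ)} {u : ι → Fin n → ℤ}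
    {Z : ι → Finset (Fin n × Bool)} (h : IsStanleyDecompOn A M u Z) : HasStanleyDecomp A M :=
  let ⟨s, e, he⟩ := h.exists_fin
  ⟨s, u ∘ e, Z ∘ e, he⟩

end IsStanleyDecompOn

section Orthant

variable {r : ℕ}

def orthantCorner (S : Fin r → Bool) : Fin r → ℤ := fun k => if S k then 0 else -1

def orthantVars (S : Fin r → Bool) : Finset (Fin r × Bool) := Finset.univ.image fun k => (k, S k)

theorem card_orthantVars (S : Fin r → Bool) : (orthantVars S).card = r := by
  rw [orthantVars, Finset.card_image_of_injective _ fun k k' h => congrArg Prod.fst h]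
  simp

theorem mem_stanleySet_orthant_iff {S : Fin r → Bool} {b : Fin r → ℤ} :
    b ∈ stanleySet (orthantCorner S) (orthantVars S) ↔ ∀ k, S k = decide (0 ≤ b k) := by
  simp only [stanleySet, orthantVars, orthantCorner, Set.mem_ofPred_eq, Finset.mem_image,
    Finset.mem_univ, true_and, Prod.mk.injEq]
  refine forall_congr' fun k => ?_
  cases hS : S k <;> simp [hS]
  omega

theorem isStanleyDecompOn_orthant :
    IsStanleyDecompOn (Finset.univ : Finset (Fin r)) Set.univ orthantCorner orthantVars := by
  refine ⟨inferInstance, fun S => ⟨fun _ _ => Finset.mem_univ _, fun k => ?_⟩, ?_, ?_⟩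
  · simp [orthantVars]
  · intro S T hST
    rw [Set.disjoint_left]
    intro b hS hT
    rw [mem_stanleySet_orthant_iff] at hS hT
    exact hST (funext fun k => (hS k).trans (hT k).symm)
  · ext b
    simp only [Set.mem_iUnion, Set.mem_univ, iff_true, mem_stanleySet_orthant_iff]
    exact ⟨fun k => decide (0 ≤ b k), fun _ => rfl⟩

end Orthant

section LaurentExtension

variable {n : ℕ}

def laurentExt (r : ℕ) (M : Set (Fin n → ℤ)) : Set (Fin (n + r) → ℤ) :=
  {a | (fun i => a (Fin.castAdd r i)) ∈ M}

theorem sdepth_laurentExt_le (r : ℕ) (A : Finset (Fin n)) (M : Set (Fin n → ℤ)) :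
    sdepth (appendIdx A Finset.univ) (laurentExt r M) ≤ sdepth A M + r := by
  refine sSup_le ?_
  rintro k ⟨s, u, Z, hD, hk⟩
  have hslice := hD.restrict 0
  rw [show {a | Fin.append a 0 ∈ laurentExt r M} = M by ext; simp [laurentExt]] at hslice
  have hres : k - r ≤ sdepth A M := hslice.le_sdepth fun i =>
    tsub_le_iff_right.2 <| (hk i).trans <| by exact_mod_cast card_le_card_leftVars_add (hD.2.1 i)
  calc k ≤ k - r + r := le_tsub_add
    _ ≤ sdepth A M + r := by gcongr

theorem add_le_sdepth_laurentExt (r : ℕ) {A : Finset (Fin n)} {M : Set (Fin n → ℤ)}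
    (hM : HasStanleyDecomp A M) :
    sdepth A M + r ≤ sdepth (appendIdx A Finset.univ) (laurentExt r M) := by
  rw [sdepth, ENat.sSup_add]
  swap
  · obtain ⟨s, u, Z, hD⟩ := hM
    exact ⟨0, s, u, Z, hD, fun _ => zero_le⟩
  refine iSup₂_le ?_
  rintro k ⟨s, u, Z, hD, hk⟩
  have hext := hD.append (isStanleyDecompOn_orthant (r := r))
  rw [show {a : Fin (n + r) → ℤ | _ ∈ M ∧ _ ∈ Set.univ} = laurentExt r M by
    ext; simp [laurentExt]] at hext
  refine hext.le_sdepth fun p => ?_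
  rw [card_appendVars, card_orthantVars, Nat.cast_add]
  gcongr
  exact hk p.1

theorem sdepth_laurentExt (r : ℕ) {A : Finset (Fin n)} {M : Set (Fin n → ℤ)}
    (hM : HasStanleyDecomp A M) :
    sdepth (appendIdx A Finset.univ) (laurentExt r M) = sdepth A M + r :=
  (sdepth_laurentExt_le r A M).antisymm (add_le_sdepth_laurentExt r hM)

end LaurentExtension

section Cells

variable {n : ℕ} (A : Finset (Fin n)) (d : ℕ)

def cellOf (a : Fin n → ℤ) : Fin n → ℤ :=
  fun j => if j ∈ A then (if 0 ≤ a j then 0 else -1) else min (a j) d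

def cellVars (a : Fin n → ℤ) : Finset (Fin n × Bool) :=
  {p | if p.2 then (if p.1 ∈ A then 0 ≤ a p.1 else (d : ℤ) ≤ a p.1) else p.1 ∈ A ∧ a p.1 < 0}

variable {A d}

@[simp]
theorem mem_cellVars_true {a : Fin n → ℤ} {i : Fin n} :
    (i, true) ∈ cellVars A d a ↔ if i ∈ A then 0 ≤ a i else (d : ℤ) ≤ a i := by
  simp [cellVars]

@[simp]
theorem mem_cellVars_false {a : Fin n → ℤ} {i : Fin n} :
    (i, false) ∈ cellVars A d a ↔ i ∈ A ∧ a i < 0 := by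
  simp [cellVars]

theorem zOk_cellVars (a : Fin n → ℤ) : ZOk A (cellVars A d a) := by
  refine ⟨fun i hi => (mem_cellVars_false.1 hi).1, fun i ⟨ht, hf⟩ => ?_⟩
  rw [mem_cellVars_false] at hf
  rw [mem_cellVars_true, if_pos hf.1] at ht
  omega

theorem stanleySet_cellOf {b : Fin n → ℤ} (hb : b ∈ SfMon A) :
    stanleySet (cellOf A d b) (cellVars A d (cellOf A d b)) =
      {a | a ∈ SfMon A ∧ cellOf A d a = cellOf A d b} := by
  ext a
  simp only [stanleySet, SfMon, Set.mem_ofPred_eq, mem_cellVars_true, mem_cellVars_false,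
    funext_iff, ← forall_and]
  refine forall_congr' fun j => ?_
  by_cases hj : j ∈ A
  · simp only [cellOf, hj, if_true, not_true_eq_false, false_implies, true_and]
    split_ifs <;> grind
  · have := hb j hj
    simp only [cellOf, hj, if_false, not_false_eq_true, true_implies, false_and]
    grind

theorem cellOf_mem_Icc {a : Fin n → ℤ} (ha : a ∈ SfMon A) :
    cellOf A d a ∈ Set.Icc (fun _ => -1) (fun _ => (d : ℤ)) := by
  refine ⟨fun j => ?_, fun j => ?_⟩ <;> have := ha j <;> simp only [cellOf] <;> split_ifs <;>
    grind

theorem hasStanleyDecomp_of_cellOf {M : Set (Fin n → ℤ)} (hM : M ⊆ SfMon A)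
    (hcell : ∀ a, cellOf A d a ∈ M ↔ a ∈ M) : HasStanleyDecomp A M := by
  have hfin : (cellOf A d '' M).Finite :=
    (Set.finite_Icc _ _).subset <| Set.image_subset_iff.2 fun a ha => cellOf_mem_Icc (hM ha)
  have hfibre : ∀ u : cellOf A d '' M, stanleySet u.1 (cellVars A d u.1) =
      {a | a ∈ SfMon A ∧ cellOf A d a = u.1} := by
    rintro ⟨_, b, hb, rfl⟩
    exact stanleySet_cellOf (hM hb)
  refine IsStanleyDecompOn.hasStanleyDecomp (u := fun u : cellOf A d '' M => u.1)
    (Z := fun u => cellVars A d u.1)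
    ⟨hfin.to_subtype, fun u => zOk_cellVars _, fun u v huv => ?_, ?_⟩
  · simp only [hfibre, Set.disjoint_left]
    rintro a ⟨-, hau⟩ ⟨-, hav⟩
    exact huv (Subtype.ext (hau.symm.trans hav))
  · ext a
    simp only [Set.mem_iUnion, hfibre, Set.mem_ofPred_eq, Subtype.exists, Set.mem_image,
      exists_prop]
    constructor
    · rintro ⟨-, ⟨b, hb, rfl⟩, ha, hab⟩
      rwa [← hcell a, hab, hcell b]
    · intro ha
      exact ⟨_, ⟨a, ha, rfl⟩, hM ha, rfl⟩

end Cells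

theorem exists_finset_subset_forall_exists_le {α : Type*} [PartialOrder α]
    [WellQuasiOrderedLE α] (s : Set α) : ∃ G : Finset α, ↑G ⊆ s ∧ ∀ a ∈ s, ∃ g ∈ G, g ≤ a := by
  have hpwo := Set.isPWO_of_wellQuasiOrderedLE s
  have hfin : {a | Minimal (· ∈ s) a}.Finite :=
    (setOfPred_minimal_antichain _).finite_of_partiallyWellOrderedOn
      (hpwo.mono (setOfPred_minimal_subset _))
  refine ⟨hfin.toFinset, fun a ha => (hfin.mem_toFinset.1 ha).1, fun a ha => ?_⟩
  obtain ⟨g, hga, hg⟩ := hpwo.exists_le_minimal ha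
  exact ⟨g, hfin.mem_toFinset.2 hg, hga⟩

namespace IsMonomialIdeal

variable {n : ℕ} {A : Finset (Fin n)} {I : Set (Fin n → ℤ)}

theorem mem_of_le (hI : IsMonomialIdeal A I) {a b : Fin n → ℤ} (ha : a ∈ I)
    (hab : ∀ j ∉ A, a j ≤ b j) : b ∈ I := by
  have := hI.2 a ha (b - a) fun j hj => sub_nonneg.2 (hab j hj)
  rwa [add_sub_cancel] at this

theorem exists_forall_mem_exists_le_min (hI : IsMonomialIdeal A I) :
    ∃ d₀ : ℕ, ∀ a ∈ I, ∃ b ∈ I, ∀ j ∉ A, b j ≤ min (a j) d₀ := by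
  obtain ⟨G, hGI, hG⟩ :=
    exists_finset_subset_forall_exists_le {g : Fin n → ℕ | (fun j => (g j : ℤ)) ∈ I}
  refine ⟨G.sup fun g => Finset.univ.sup g, fun a ha => ?_⟩
  have ha' : (fun j => ((if j ∈ A then 0 else (a j).toNat : ℕ) : ℤ)) ∈ I :=
    hI.mem_of_le ha fun j hj => by simp [hj]
  obtain ⟨g, hg, hga⟩ := hG _ ha'
  refine ⟨_, hGI hg, fun j hj => le_min ?_ ?_⟩
  · have := hga j
    have := Int.toNat_of_nonneg (hI.1 ha j hj)
    simp only [hj, if_false] at *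
    omega
  · exact_mod_cast (Finset.le_sup (Finset.mem_univ j)).trans
      (Finset.le_sup (f := fun g => Finset.univ.sup g) hg)

theorem exists_cellOf_mem_iff (hI : IsMonomialIdeal A I) :
    ∃ d₀ : ℕ, ∀ d ≥ d₀, ∀ a, cellOf A d a ∈ I ↔ a ∈ I := by
  obtain ⟨d₀, hd₀⟩ := hI.exists_forall_mem_exists_le_min
  refine ⟨d₀, fun d hd a => ⟨fun h => hI.mem_of_le h fun j hj => ?_, fun h => ?_⟩⟩
  · simp [cellOf, hj]
  · obtain ⟨b, hb, hba⟩ := hd₀ a h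
    refine hI.mem_of_le hb fun j hj => ?_
    have := hba j hj
    simp only [cellOf, hj, if_false]
    omega

theorem hasStanleyDecomp_diff {J : Set (Fin n → ℤ)} (hI : IsMonomialIdeal A I)
    (hJ : IsMonomialIdeal A J) : HasStanleyDecomp A (I \ J) := by
  obtain ⟨dI, hdI⟩ := hI.exists_cellOf_mem_iff
  obtain ⟨dJ, hdJ⟩ := hJ.exists_cellOf_mem_iff
  refine hasStanleyDecomp_of_cellOf (d := max dI dJ) (fun a ha => hI.1 ha.1) fun a => ?_
  rw [Set.mem_sdiff, Set.mem_sdiff, hdI _ (le_max_left _ _), hdJ _ (le_max_right _ _)]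

end IsMonomialIdeal

theorem sdepth_laurent_extension_general {n r : ℕ} (A : Finset (Fin n))
    (I J : Set (Fin n → ℤ))
    (hI : IsMonomialIdeal A I) (hJ : IsMonomialIdeal A J) :
    sdepth (A.image (Fin.castAdd r) ∪ Finset.univ.image (Fin.natAdd n))
        {a : Fin (n + r) → ℤ | (fun i : Fin n => a (Fin.castAdd r i)) ∈ I \ J} =
      sdepth A (I \ J) + (r : ℕ∞) :=
  sdepth_laurentExt r (hI.hasStanleyDecomp_diff hJ)

/-- For monomial ideals `J ⊂ I ⊂ S_f` and `r` new Laurent variables `t_1, …, t_r`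
(encoded as the last `r` indices of `Fin (n + r)`):
`sdepth (I/J)[t_1^{±1}, …, t_r^{±1}] = sdepth I/J + r`. -/
theorem sdepth_laurent_extension {n r : ℕ} (A : Finset (Fin n))
    (I J : Set (Fin n → ℤ))
    (hI : IsMonomialIdeal A I) (hJ : IsMonomialIdeal A J) (hJI : J ⊂ I) :
    sdepth (A.image (Fin.castAdd r) ∪ Finset.univ.image (Fin.natAdd n))
        {a : Fin (n + r) → ℤ | (fun i : Fin n => a (Fin.castAdd r i)) ∈ I \ J} =
      sdepth A (I \ J) + (r : ℕ∞) :=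
  sdepth_laurent_extension_general A I J hI hJ
end
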